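/- Fix d ≥ 2 and δ ∈ (0,1). Let {v_1, …, v_n} be a δ-net of S^{d-1}, for each j let P_j = {x ∈ ℝ^d : ‖x‖ ≤ 1, x·v_j > 1 − δ²/8}, let K_0 = B_d \ ∪_{j=1}^n P_j, and for x ∈ {0,1}^n let K_x = K_0 ∪ ∪_{j : x_j = 1} P_j. Then K_x = B_d ∩ ⋂_{j : x_j = 0} {y ∈ ℝ^d : y·v_j ≤ 1 − δ²/8}; in particular, K_x is a convex set for every x ∈ {0,1}^n. -/
import Mathlib


open Metric Set MeasureTheory
open scoped RealInnerProductSpace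

noncomputable section

/-- `N` is a `δ`-net of `S`. -/
def IsNet {d : ℕ} (δ : ℝ) (N S : Set (EuclideanSpace ℝ (Fin d))) : Prop :=
  N ⊆ S ∧ (∀ v ∈ N, ∀ w ∈ N, v ≠ w → δ ≤ dist v w) ∧ ∀ v ∈ S, ∃ w ∈ N, dist v w ≤ δ

/-- The spherical cap of radius `δ/2` around `v`: `{x : ‖x‖ ≤ 1, ⟪x, v⟫ > 1 - δ²/8}`. -/
def cap {d : ℕ} (δ : ℝ) (v : EuclideanSpace ℝ (Fin d)) : Set (EuclideanSpace ℝ (Fin d)) :=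
  {x | ‖x‖ ≤ 1 ∧ 1 - δ ^ 2 / 8 < ⟪x, v⟫}

/-- The unit ball with all the caps removed. -/
def capBase {d n : ℕ} (δ : ℝ) (v : Fin n → EuclideanSpace ℝ (Fin d)) :
    Set (EuclideanSpace ℝ (Fin d)) :=
  closedBall 0 1 \ ⋃ j, cap δ (v j)

/-- The convex body `K_x` associated to a bitstring `x`. -/
def capBody {d n : ℕ} (δ : ℝ) (v : Fin n → EuclideanSpace ℝ (Fin d)) (x : Fin n → Bool) :
    Set (EuclideanSpace ℝ (Fin d)) :=
  capBase δ v ∪ ⋃ j ∈ {j | x j = true}, cap δ (v j)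

/-- For a `δ`-net `{v_1, …, v_n}` of `S^{d-1}`,
`K_x = B_d ∩ ⋂_{j : x_j = 0} {y : ⟪y, v_j⟫ ≤ 1 - δ²/8}`; in particular `K_x` is convex. -/
theorem capBody_eq_inter_halfspaces (d : ℕ) (hd : 2 ≤ d) (δ : ℝ) (hδ0 : 0 < δ) (hδ1 : δ < 1)
    (n : ℕ) (v : Fin n → EuclideanSpace ℝ (Fin d)) (hinj : Function.Injective v)
    (hnet : IsNet δ (Set.range v) (sphere (0 : EuclideanSpace ℝ (Fin d)) 1))
    (x : Fin n → Bool) :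
    capBody δ v x =
      closedBall (0 : EuclideanSpace ℝ (Fin d)) 1 ∩
        ⋂ j ∈ {j | x j = false}, {y : EuclideanSpace ℝ (Fin d) | ⟪y, v j⟫ ≤ 1 - δ ^ 2 / 8} ∧
    Convex ℝ (capBody δ v x) := by
  have hnorm : ∀ j, ‖v j‖ = 1 := by
    intro j
    have := hnet.1 (mem_range_self j)
    simpa [mem_sphere_iff_norm] using this
  -- two caps containing a common point must be the same cap
  have key : ∀ j k (y : EuclideanSpace ℝ (Fin d)), ‖y‖ ≤ 1 →
      1 - δ ^ 2 / 8 < ⟪y, v j⟫ → 1 - δ ^ 2 / 8 < ⟪y, v k⟫ → j = k := by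
    intro j k y hy hj hk
    by_contra hne
    have hvne : v j ≠ v k := fun h => hne (hinj h)
    have hd1 : ∀ m, 1 - δ ^ 2 / 8 < ⟪y, v m⟫ → ‖y - v m‖ < δ / 2 := by
      intro m hm
      have h1 : ‖y - v m‖ ^ 2 < (δ / 2) ^ 2 := by
        rw [norm_sub_sq_real, hnorm m]
        nlinarith [norm_nonneg y]
      nlinarith [norm_nonneg (y - v m)]
    have hge := hnet.2.1 (v j) (mem_range_self j) (v k) (mem_range_self k) hvne
    have hlt : dist (v j) (v k) < δ := by
      calc dist (v j) (v k) ≤ dist (v j) y + dist y (v k) := dist_triangle _ _ _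
        _ < δ / 2 + δ / 2 := by
            refine add_lt_add ?_ ?_
            · rw [dist_comm, dist_eq_norm]; exact hd1 j hj
            · rw [dist_eq_norm]; exact hd1 k hk
        _ = δ := by ring
    linarith
  have heq : capBody δ v x =
      closedBall (0 : EuclideanSpace ℝ (Fin d)) 1 ∩
        ⋂ j ∈ {j | x j = false}, {y : EuclideanSpace ℝ (Fin d) | ⟪y, v j⟫ ≤ 1 - δ ^ 2 / 8} := by
    ext y
    simp only [capBody, capBase, cap, mem_union, mem_diff, mem_iUnion, mem_inter_iff,
      mem_closedBall, dist_zero_right, mem_iInter, mem_setOf_eq, not_exists]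
    constructor
    · rintro (⟨hy, hnc⟩ | ⟨j, hj, hyb, hyj⟩)
      · exact ⟨hy, fun k hk => le_of_not_gt fun h => hnc k ⟨hy, h⟩⟩
      · refine ⟨hyb, fun k hk => ?_⟩
        by_contra h
        push_neg at h
        have := key j k y hyb hyj h
        rw [this] at hj
        simp [hk] at hj
    · rintro ⟨hy, h⟩
      by_cases hc : ∃ j, y ∈ cap δ (v j)
      · obtain ⟨j, hj⟩ := hc
        right
        refine ⟨j, ?_, hj.1, hj.2⟩
        by_contra hxj
        have hxj' : x j = false := by simpa using hxj
        exact absurd (h j hxj') (not_le.mpr hj.2)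
      · left
        push_neg at hc
        exact ⟨hy, fun k hk => hc k (by exact ⟨hk.1, hk.2⟩)⟩
  refine ⟨heq, ?_⟩
  rw [heq]
  refine (convex_closedBall _ _).inter (convex_iInter₂ fun j hj => ?_)
  exact convex_halfSpace_le ⟨fun a b => inner_add_left a b (v j),
    fun c a => real_inner_smul_left a (v j) c⟩ _
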